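/- arXiv:2105.09519 — 6 statements merged into one kernel-verified Lean document; each statement's English description precedes it below -/
import Mathlib

section
/- Let A and B be n×n Hermitian matrices, and let F_A and F_B denote the cumulative distribution functions of their empirical spectral distributions (the uniform probability measures on their eigenvalues counted with multiplicity). Then for every real x, |F_A(x) − F_B(x)| ≤ rank(A − B)/n. -/
open MeasureTheory Finset

/-- CDF of the empirical spectral distribution of a Hermitian matrix:
`F_A(x) = (1/n) · #{i : λ_i(A) ≤ x}`. -/
noncomputable def esdCDF {n : ℕ} {A : Matrix (Fin n) (Fin n) ℂ}
    (hA : A.IsHermitian) (x : ℝ) : ℝ :=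
  ((Finset.univ.filter (fun i => hA.eigenvalues i ≤ x)).card : ℝ) / n

section Aux

open Matrix Module Submodule

variable {n : ℕ}

local notation "E" => EuclideanSpace ℂ (Fin n)

local notation "⟪" x ", " y "⟫" => @inner ℂ _ _ x y

private lemma rank_neg' (M : Matrix (Fin n) (Fin n) ℂ) : (-M).rank = M.rank := by
  unfold Matrix.rank
  have : (-M).mulVecLin = -(M.mulVecLin) := by
    ext v i
    simp [Matrix.neg_mulVec]
  rw [this, LinearMap.range_neg]

private lemma image_coe (g : Fin n → E) (s : Finset (Fin n)) :
    g '' ↑s = Set.range (fun i : ↥s => g i) := by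
  ext y
  simp

private lemma exists_rep (e : OrthonormalBasis (Fin n) ℂ E) (s : Finset (Fin n)) (v : E)
    (hv : v ∈ span ℂ (e '' ↑s)) : ∃ c : Fin n → ℂ, v = ∑ i ∈ s, c i • e i := by
  classical
  rw [image_coe (⇑e) s] at hv
  obtain ⟨c, hc⟩ := (mem_span_range_iff_exists_fun ℂ).1 hv
  refine ⟨fun i => if h : i ∈ s then c ⟨i, h⟩ else 0, ?_⟩
  rw [← hc]
  rw [← Finset.sum_coe_sort s (fun i => (if h : i ∈ s then c ⟨i, h⟩ else 0) • e i)]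
  refine Finset.sum_congr rfl fun i _ => ?_
  rw [dif_pos i.2]

private lemma quad_eq (e : OrthonormalBasis (Fin n) ℂ E) (μ : Fin n → ℝ) (T : E →ₗ[ℂ] E)
    (hT : ∀ i, T (e i) = (μ i : ℂ) • e i) (s : Finset (Fin n)) (c : Fin n → ℂ) :
    (⟪(∑ i ∈ s, c i • e i), T (∑ i ∈ s, c i • e i)⟫).re
      = ∑ i ∈ s, μ i * Complex.normSq (c i) := by
  have hTv : T (∑ i ∈ s, c i • e i) = ∑ i ∈ s, ((μ i : ℂ) * c i) • e i := by
    rw [map_sum]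
    refine Finset.sum_congr rfl fun i _ => ?_
    rw [LinearMap.map_smul, hT i, smul_smul, mul_comm]
  rw [hTv, e.orthonormal.inner_sum]
  rw [Complex.re_sum]
  refine Finset.sum_congr rfl fun i _ => ?_
  have : (starRingEnd ℂ) (c i) * ((μ i : ℂ) * c i)
      = (μ i : ℂ) * ((starRingEnd ℂ) (c i) * c i) := by ring
  rw [this]
  rw [show (starRingEnd ℂ) (c i) * c i = (Complex.normSq (c i) : ℂ) by
    rw [mul_comm, Complex.mul_conj]]
  simp

private lemma norm_eq (e : OrthonormalBasis (Fin n) ℂ E) (s : Finset (Fin n)) (c : Fin n → ℂ) :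
    (⟪(∑ i ∈ s, c i • e i), (∑ i ∈ s, c i • e i)⟫).re
      = ∑ i ∈ s, Complex.normSq (c i) := by
  rw [e.orthonormal.inner_sum, Complex.re_sum]
  refine Finset.sum_congr rfl fun i _ => ?_
  rw [show (starRingEnd ℂ) (c i) * c i = (Complex.normSq (c i) : ℂ) by
    rw [mul_comm, Complex.mul_conj]]
  simp

/-- Key counting lemma: the number of eigenvalues of `A` that are `≤ x` is at most
the number of eigenvalues of `B` that are `≤ x`, plus `rank (A - B)`. -/
private lemma card_le_card_add_rank {A B : Matrix (Fin n) (Fin n) ℂ}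
    (hA : A.IsHermitian) (hB : B.IsHermitian) (x : ℝ) :
    (Finset.univ.filter (fun i => hA.eigenvalues i ≤ x)).card
      ≤ (Finset.univ.filter (fun i => hB.eigenvalues i ≤ x)).card + (A - B).rank := by
  classical
  set e := hA.eigenvectorBasis with he
  set f := hB.eigenvectorBasis with hf
  set sA : Finset (Fin n) := Finset.univ.filter (fun i => hA.eigenvalues i ≤ x) with hsA
  set sB : Finset (Fin n) := Finset.univ.filter (fun i => ¬ hB.eigenvalues i ≤ x) with hsB
  set V : Submodule ℂ E := span ℂ (e '' ↑sA) with hV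
  set W : Submodule ℂ E := span ℂ (f '' ↑sB) with hW
  set K : Submodule ℂ E := LinearMap.ker ((A - B).toEuclideanLin) with hK
  -- eigen-equations for the Euclidean linear maps
  have hTA : ∀ i, A.toEuclideanLin (e i) = ((hA.eigenvalues i : ℂ)) • e i := by
    intro i
    apply (WithLp.equiv 2 (Fin n → ℂ)).injective
    ext j
    have := congrFun (hA.mulVec_eigenvectorBasis i) j
    simpa using this
  have hTB : ∀ i, B.toEuclideanLin (f i) = ((hB.eigenvalues i : ℂ)) • f i := by
    intro i
    apply (WithLp.equiv 2 (Fin n → ℂ)).injective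
    ext j
    have := congrFun (hB.mulVec_eigenvectorBasis i) j
    simpa using this
  -- the triple intersection is trivial
  have hbot : V ⊓ (W ⊓ K) = ⊥ := by
    rw [eq_bot_iff]
    rintro v ⟨hvV, hvW, hvK⟩
    rw [Submodule.mem_bot]
    by_contra hv0
    obtain ⟨cA, hcA⟩ := exists_rep e sA v hvV
    obtain ⟨cB, hcB⟩ := exists_rep f sB v hvW
    have hAB : A.toEuclideanLin v = B.toEuclideanLin v := by
      have h0 : (A - B).toEuclideanLin v = 0 := LinearMap.mem_ker.mp hvK
      rw [map_sub, LinearMap.sub_apply] at h0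
      exact sub_eq_zero.mp h0
    have hqA : (⟪v, A.toEuclideanLin v⟫).re = ∑ i ∈ sA, hA.eigenvalues i * Complex.normSq (cA i) := by
      rw [hcA]; exact quad_eq e hA.eigenvalues A.toEuclideanLin hTA sA cA
    have hqB : (⟪v, B.toEuclideanLin v⟫).re = ∑ i ∈ sB, hB.eigenvalues i * Complex.normSq (cB i) := by
      rw [hcB]; exact quad_eq f hB.eigenvalues B.toEuclideanLin hTB sB cB
    have hnA : (⟪v, v⟫).re = ∑ i ∈ sA, Complex.normSq (cA i) := by
      rw [hcA]; exact norm_eq e sA cA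
    have hnB : (⟪v, v⟫).re = ∑ i ∈ sB, Complex.normSq (cB i) := by
      rw [hcB]; exact norm_eq f sB cB
    -- upper bound from sA
    have hup : (⟪v, A.toEuclideanLin v⟫).re ≤ x * (⟪v, v⟫).re := by
      rw [hqA, hnA, Finset.mul_sum]
      refine Finset.sum_le_sum fun i hi => ?_
      have hix : hA.eigenvalues i ≤ x := by
        simpa [hsA] using hi
      exact mul_le_mul_of_nonneg_right hix (Complex.normSq_nonneg _)
    -- strict lower bound from sB
    have hex : ∃ i ∈ sB, cB i ≠ 0 := by
      by_contra hcon
      push_neg at hcon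
      apply hv0
      rw [hcB]
      exact Finset.sum_eq_zero fun i hi => by rw [hcon i hi, zero_smul]
    obtain ⟨i₀, hi₀, hci₀⟩ := hex
    have hlow : x * (⟪v, v⟫).re < (⟪v, B.toEuclideanLin v⟫).re := by
      rw [hqB, hnB, Finset.mul_sum]
      refine Finset.sum_lt_sum (fun i hi => ?_) ⟨i₀, hi₀, ?_⟩
      · have hix : x ≤ hB.eigenvalues i := by
          have : ¬ hB.eigenvalues i ≤ x := by simpa [hsB] using hi
          linarith [lt_of_not_ge this]
        exact mul_le_mul_of_nonneg_right hix (Complex.normSq_nonneg _)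
      · have hix : x < hB.eigenvalues i₀ := by
          have : ¬ hB.eigenvalues i₀ ≤ x := by simpa [hsB] using hi₀
          exact lt_of_not_ge this
        exact mul_lt_mul_of_pos_right hix (Complex.normSq_pos.mpr hci₀)
    rw [hAB] at hup
    linarith
  -- dimensions
  have hdimV : finrank ℂ V = sA.card := by
    have hli : LinearIndependent ℂ (fun i : ↥sA => e i) :=
      (e.orthonormal.comp Subtype.val Subtype.val_injective).linearIndependent
    have : V = span ℂ (Set.range (fun i : ↥sA => e i)) := by
      rw [hV, image_coe]
    rw [this, finrank_span_eq_card hli, Fintype.card_coe]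
  have hdimW : finrank ℂ W = sB.card := by
    have hli : LinearIndependent ℂ (fun i : ↥sB => f i) :=
      (f.orthonormal.comp Subtype.val Subtype.val_injective).linearIndependent
    have : W = span ℂ (Set.range (fun i : ↥sB => f i)) := by
      rw [hW, image_coe]
    rw [this, finrank_span_eq_card hli, Fintype.card_coe]
  have hdimK : finrank ℂ K + (A - B).rank = n := by
    have h1 : (A - B).rank = finrank ℂ (LinearMap.range ((A - B).toEuclideanLin)) := by
      rw [Matrix.rank_eq_finrank_range_toLin (A - B) (EuclideanSpace.basisFun (Fin n) ℂ).toBasis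
        (EuclideanSpace.basisFun (Fin n) ℂ).toBasis, Matrix.toEuclideanLin_eq_toLin_orthonormal]
    have h2 := LinearMap.finrank_range_add_finrank_ker ((A - B).toEuclideanLin)
    rw [finrank_euclideanSpace_fin] at h2
    rw [← hK] at h2
    omega
  -- dimension counting
  have h1 : finrank ℂ V + finrank ℂ (W ⊓ K : Submodule ℂ E) ≤ n := by
    have heq := Submodule.finrank_sup_add_finrank_inf_eq V (W ⊓ K)
    rw [hbot] at heq
    have hle : finrank ℂ (V ⊔ (W ⊓ K) : Submodule ℂ E) ≤ n := by
      have := Submodule.finrank_le (V ⊔ (W ⊓ K) : Submodule ℂ E)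
      rwa [finrank_euclideanSpace_fin] at this
    simp only [finrank_bot, add_zero] at heq
    omega
  have h2 : finrank ℂ W + finrank ℂ K ≤ n + finrank ℂ (W ⊓ K : Submodule ℂ E) := by
    have heq := Submodule.finrank_sup_add_finrank_inf_eq W K
    have hle : finrank ℂ (W ⊔ K : Submodule ℂ E) ≤ n := by
      have := Submodule.finrank_le (W ⊔ K : Submodule ℂ E)
      rwa [finrank_euclideanSpace_fin] at this
    omega
  have hsplit : sA.card ≤ n ∧ (Finset.univ.filter (fun i => hB.eigenvalues i ≤ x)).card
      + sB.card = n := by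
    constructor
    · exact le_trans (Finset.card_le_card (Finset.filter_subset _ _)) (by simp)
    · have := Finset.card_filter_add_card_filter_not
        (s := (Finset.univ : Finset (Fin n))) (p := fun i => hB.eigenvalues i ≤ x)
      simp only [Finset.card_univ, Fintype.card_fin] at this
      exact this
  omega

end Aux

/-- Rank inequality (Bai–Silverstein Theorem A.43): for Hermitian `A`, `B`,
`|F_A(x) − F_B(x)| ≤ rank(A − B)/n` for every real `x`. -/
theorem rank_inequality {n : ℕ} {A B : Matrix (Fin n) (Fin n) ℂ}
    (hA : A.IsHermitian) (hB : B.IsHermitian) (x : ℝ) :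
    |esdCDF hA x - esdCDF hB x| ≤ ((A - B).rank : ℝ) / n := by
  rcases Nat.eq_zero_or_pos n with hn | hn
  · subst hn
    simp [esdCDF]
  · have h1 := card_le_card_add_rank hA hB x
    have h2 := card_le_card_add_rank hB hA x
    rw [(neg_sub A B).symm, rank_neg'] at h2
    rw [esdCDF, esdCDF, div_sub_div_same, abs_div, abs_of_nonneg (by positivity : (0:ℝ) ≤ (n:ℝ))]
    gcongr
    have h1' : ((Finset.univ.filter (fun i => hA.eigenvalues i ≤ x)).card : ℝ)
        ≤ ((Finset.univ.filter (fun i => hB.eigenvalues i ≤ x)).card : ℝ) + (A - B).rank := by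
      exact_mod_cast h1
    have h2' : ((Finset.univ.filter (fun i => hB.eigenvalues i ≤ x)).card : ℝ)
        ≤ ((Finset.univ.filter (fun i => hA.eigenvalues i ≤ x)).card : ℝ) + (A - B).rank := by
      exact_mod_cast h2
    rw [abs_sub_le_iff]
    constructor <;> linarith
end

section
/- Let X_1, ..., X_n be independent real-valued random variables with |X_i| ≤ 1 and 𝔼X_i = 0 for all i, and let S = X_1 + ... + X_n. Then for every x > 0, P(S ≥ x) ≤ exp(−x² / (2(𝔼S² + x))). -/
/-!
Chernoff's bound reduces the tail of `S` to its moment generating function. Comparing exponential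
series term by term gives `exp (t u) ≤ 1 + t u + u² (eᵗ - 1 - t)` for `|u| ≤ 1` and `t ≥ 0`, so each
centred `Xᵢ` has `𝔼 exp (t Xᵢ) ≤ exp ((eᵗ - 1 - t) 𝔼Xᵢ²)`. Independence makes the `mgf` of `S` the
product of these, and together with centring gives `𝔼S² = ∑ 𝔼Xᵢ²`, so `𝔼 exp (t S) ≤
exp ((eᵗ - 1 - t) 𝔼S²)`. Finally `(1 - t) (eᵗ - 1 - t) ≤ t² / 2` on `[0, 1]`, and the choice
`t = x / (𝔼S² + x)` yields the exponent `-x² / (2 (𝔼S² + x))`.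
-/

open MeasureTheory ProbabilityTheory Nat

namespace Real

lemma exp_sub_one_sub_eq_tsum (s : ℝ) :
    exp s - 1 - s = ∑' n : ℕ, s ^ (n + 2) / ((n + 2)! : ℝ) := by
  have hf : Summable fun n : ℕ => s ^ n / (n ! : ℝ) := summable_pow_div_factorial s
  rw [exp_eq_exp_ℝ, NormedSpace.exp_eq_tsum_div]
  beta_reduce
  rw [hf.tsum_eq_zero_add, ((summable_nat_add_iff 1).2 hf).tsum_eq_zero_add]
  simp [Nat.factorial]

lemma exp_mul_sub_one_sub_le {t u : ℝ} (ht : 0 ≤ t) (hu : |u| ≤ 1) :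
    exp (t * u) - 1 - t * u ≤ u ^ 2 * (exp t - 1 - t) := by
  rw [exp_sub_one_sub_eq_tsum, exp_sub_one_sub_eq_tsum, ← tsum_mul_left]
  refine Summable.tsum_le_tsum (fun n => ?_)
    ((summable_nat_add_iff 2).2 (summable_pow_div_factorial _))
    (((summable_nat_add_iff 2).2 (summable_pow_div_factorial t)).mul_left _)
  have hpow : (t * u) ^ (n + 2) ≤ u ^ 2 * t ^ (n + 2) :=
    calc (t * u) ^ (n + 2) ≤ |t * u| ^ (n + 2) := (le_abs_self _).trans (abs_pow _ _).le
      _ = t ^ (n + 2) * (|u| ^ n * u ^ 2) := by rw [abs_mul, abs_of_nonneg ht, ← sq_abs u]; ring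
      _ ≤ t ^ (n + 2) * (1 * u ^ 2) := by gcongr; exact pow_le_one₀ (abs_nonneg u) hu
      _ = u ^ 2 * t ^ (n + 2) := by ring
  rw [← mul_div_assoc]
  exact div_le_div_of_nonneg_right hpow (by positivity)

lemma one_sub_mul_exp_sub_one_sub_le {t : ℝ} (ht0 : 0 ≤ t) (ht1 : t ≤ 1) :
    (1 - t) * (exp t - 1 - t) ≤ t ^ 2 / 2 := by
  rcases ht1.eq_or_lt with rfl | ht1
  · norm_num
  have hgeo : Summable fun n : ℕ => t ^ 2 / 2 * t ^ n :=
    (summable_geometric_of_lt_one ht0 ht1).mul_left _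
  have hseries : exp t - 1 - t ≤ t ^ 2 / 2 * (1 - t)⁻¹ := by
    rw [exp_sub_one_sub_eq_tsum, ← tsum_geometric_of_lt_one ht0 ht1, ← tsum_mul_left]
    refine Summable.tsum_le_tsum (fun n => ?_)
      ((summable_nat_add_iff 2).2 (summable_pow_div_factorial t)) hgeo
    have h2 : (2 : ℝ) ≤ (n + 2)! := by
      exact_mod_cast (Nat.self_le_factorial (n + 2)).trans' (by omega)
    calc t ^ (n + 2) / ((n + 2)! : ℝ) ≤ t ^ (n + 2) / 2 := by gcongr
      _ = t ^ 2 / 2 * t ^ n := by ring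
  calc (1 - t) * (exp t - 1 - t) ≤ (1 - t) * (t ^ 2 / 2 * (1 - t)⁻¹) := by gcongr
    _ = t ^ 2 / 2 := by field_simp

end Real

section

open Real

variable {Ω : Type*} [MeasurableSpace Ω] {μ : Measure Ω}

lemma mgf_le_exp_mul_integral_sq [IsProbabilityMeasure μ] {Y : Ω → ℝ} (hY : AEMeasurable Y μ)
    (hbdd : ∀ᵐ ω ∂μ, |Y ω| ≤ 1) (hmean : μ[Y] = 0) {t : ℝ} (ht : 0 ≤ t) :
    mgf Y μ t ≤ exp ((exp t - 1 - t) * ∫ ω, Y ω ^ 2 ∂μ) := by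
  set c := exp t - 1 - t
  have hint : Integrable Y μ := .of_bound hY.aestronglyMeasurable 1 (by simpa using hbdd)
  have hint_sq : Integrable (fun ω => Y ω ^ 2) μ :=
    .of_bound (hY.pow_const 2).aestronglyMeasurable 1 <| hbdd.mono fun ω h => by
      rw [norm_pow, norm_eq_abs]
      exact pow_le_one₀ (abs_nonneg _) h
  have hint_exp := integrable_exp_mul_of_le t 1 ht hY (hbdd.mono fun ω h => (le_abs_self _).trans h)
  have hint_lin : Integrable (fun ω => 1 + t * Y ω) μ := (integrable_const 1).add (hint.const_mul t)
  have hint_quad : Integrable (fun ω => 1 + t * Y ω + c * Y ω ^ 2) μ :=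
    hint_lin.add (hint_sq.const_mul c)
  calc mgf Y μ t = ∫ ω, exp (t * Y ω) ∂μ := rfl
    _ ≤ ∫ ω, (1 + t * Y ω + c * Y ω ^ 2) ∂μ :=
      integral_mono_ae hint_exp hint_quad <| hbdd.mono fun ω h => by
        linarith [exp_mul_sub_one_sub_le ht h]
    _ = 1 + c * ∫ ω, Y ω ^ 2 ∂μ := by
      rw [integral_add hint_lin (hint_sq.const_mul c),
        integral_add (integrable_const 1) (hint.const_mul t), integral_const, integral_const_mul,
        integral_const_mul, hmean]
      simp
    _ ≤ exp (c * ∫ ω, Y ω ^ 2 ∂μ) := by linarith [add_one_le_exp (c * ∫ ω, Y ω ^ 2 ∂μ)]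

lemma integral_sum_sq_eq_sum_integral_sq [IsFiniteMeasure μ] {ι : Type*} {X : ι → Ω → ℝ}
    (s : Finset ι) (hX : ∀ i ∈ s, MemLp (X i) 2 μ)
    (hindep : Set.Pairwise ↑s fun i j => X i ⟂ᵢ[μ] X j) (hmean : ∀ i ∈ s, μ[X i] = 0) :
    ∫ ω, (∑ i ∈ s, X i ω) ^ 2 ∂μ = ∑ i ∈ s, ∫ ω, X i ω ^ 2 ∂μ := by
  have hsum_mean : μ[∑ i ∈ s, X i] = 0 := by
    simp only [Finset.sum_apply]
    rw [integral_finsetSum s fun i hi => (hX i hi).integrable one_le_two]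
    exact Finset.sum_eq_zero hmean
  have hvar := IndepFun.variance_sum hX hindep
  rw [variance_of_integral_eq_zero (memLp_finsetSum' s hX).aemeasurable hsum_mean,
    Finset.sum_congr rfl fun i hi => variance_of_integral_eq_zero (hX i hi).aemeasurable
      (hmean i hi)] at hvar
  simpa only [Finset.sum_apply] using hvar

lemma mgf_sum_le_exp_mul_integral_sum_sq {ι : Type*} {X : ι → Ω → ℝ} (s : Finset ι)
    (hindep : iIndepFun X μ) (hmeas : ∀ i, AEMeasurable (X i) μ)
    (hbdd : ∀ i, ∀ᵐ ω ∂μ, |X i ω| ≤ 1) (hmean : ∀ i, μ[X i] = 0) {t : ℝ} (ht : 0 ≤ t) :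
    mgf (∑ i ∈ s, X i) μ t ≤ exp ((exp t - 1 - t) * ∫ ω, (∑ i ∈ s, X i ω) ^ 2 ∂μ) := by
  have := hindep.isProbabilityMeasure
  have hX : ∀ i ∈ s, MemLp (X i) 2 μ := fun i _ =>
    .of_bound (hmeas i).aestronglyMeasurable 1 (by simpa using hbdd i)
  rw [hindep.mgf_sum₀ hmeas, integral_sum_sq_eq_sum_integral_sq s hX
    (fun i _ j _ hij => hindep.indepFun hij) (fun i _ => hmean i), Finset.mul_sum, exp_sum]
  exact Finset.prod_le_prod (fun _ _ => mgf_nonneg)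
    (fun i _ => mgf_le_exp_mul_integral_sq (hmeas i) (hbdd i) (hmean i) ht)

end

lemma bernstein_exponent_le {v x : ℝ} (hv : 0 ≤ v) (hx : 0 < x) :
    -(x / (v + x)) * x + (Real.exp (x / (v + x)) - 1 - x / (v + x)) * v
      ≤ -x ^ 2 / (2 * (v + x)) := by
  have hvx : 0 < v + x := by linarith
  set t := x / (v + x) with ht_def
  have ht0 : 0 ≤ t := by positivity
  have ht1 : t ≤ 1 := (div_le_one hvx).2 (by linarith)
  have hv_eq : v = (v + x) * (1 - t) := by rw [ht_def]; field_simp; ring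
  have htx : t * x = (v + x) * t ^ 2 := by rw [ht_def]; field_simp
  have hrhs : -x ^ 2 / (2 * (v + x)) = -((v + x) * t ^ 2) / 2 := by rw [ht_def]; field_simp
  have key := mul_le_mul_of_nonneg_left (Real.one_sub_mul_exp_sub_one_sub_le ht0 ht1) hvx.le
  rw [hrhs]
  linear_combination key - htx + (Real.exp t - 1 - t) * hv_eq

/-- Bernstein's inequality: if `X_1, …, X_n` are independent, `|X_i| ≤ 1`,
`𝔼X_i = 0`, and `S = X_1 + ⋯ + X_n`, then
`P(S ≥ x) ≤ exp(−x²/(2(𝔼S² + x)))` for every `x > 0`. -/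
theorem bernstein_inequality {Ω : Type*} [MeasurableSpace Ω]
    (P : Measure Ω) [IsProbabilityMeasure P] {n : ℕ} (X : Fin n → Ω → ℝ)
    (hmeas : ∀ i, Measurable (X i))
    (hindep : iIndepFun X P)
    (hbdd : ∀ i ω, |X i ω| ≤ 1)
    (hmean : ∀ i, ∫ ω, X i ω ∂P = 0)
    (x : ℝ) (hx : 0 < x) :
    (P {ω | x ≤ ∑ i, X i ω}).toReal
      ≤ Real.exp (-x ^ 2 / (2 * ((∫ ω, (∑ i, X i ω) ^ 2 ∂P) + x))) := by
  set σ2 := ∫ ω, (∑ i, X i ω) ^ 2 ∂P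
  have hσ2 : 0 ≤ σ2 := integral_nonneg fun ω => sq_nonneg _
  set t := x / (σ2 + x)
  have ht : 0 ≤ t := by positivity
  have hS_le : ∀ ω, (∑ i, X i) ω ≤ n := fun ω => by
    simpa [Finset.sum_apply] using
      Finset.sum_le_sum fun i (_ : i ∈ Finset.univ) => (le_abs_self _).trans (hbdd i ω)
  have hchernoff := measure_ge_le_exp_mul_mgf x ht
    (integrable_exp_mul_of_le t n ht (by fun_prop) (ae_of_all P hS_le))
  have hmgf := mgf_sum_le_exp_mul_integral_sum_sq Finset.univ hindep (fun i => (hmeas i).aemeasurable)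
    (fun i => ae_of_all P (hbdd i)) hmean ht
  calc (P {ω | x ≤ ∑ i, X i ω}).toReal = P.real {ω | x ≤ (∑ i, X i) ω} := by
        simp only [Measure.real, Finset.sum_apply]
    _ ≤ Real.exp (-t * x) * Real.exp ((Real.exp t - 1 - t) * σ2) :=
        hchernoff.trans (by gcongr)
    _ = Real.exp (-t * x + (Real.exp t - 1 - t) * σ2) := (Real.exp_add _ _).symm
    _ ≤ _ := Real.exp_le_exp.2 (bernstein_exponent_le hσ2 hx)
end

section
/- For each n ∈ ℕ, let x_1^(n), ..., x_n^(n) be nonnegative reals. If (1/n)·∑_{i=1}^n x_i^(n) → 0 as n → ∞, then there exist nonempty subsets K_n ⊆ {1,...,n} such that |K_n|/n → 1 and max_{i ∈ K_n} x_i^(n) → 0. -/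
open Filter Finset

open scoped BigOperators

/-!
Let `a` be the mean of a nonnegative finite family and keep the indices whose value is at most
`a + √a`. Some value is at most the mean, so the kept set is nonempty, and by Markov's inequality
at most a `√a`-fraction of the indices is discarded. Applied row by row to the triangular array,
both `a + √a` and `√a` tend to zero with the averages.
-/

section MeanThreshold

variable {ι : Type*} {s : Finset ι}

theorem card_filter_lt_nsmul_le_sum {M : Type*} [AddCommMonoid M] [LinearOrder M]
    [IsOrderedAddMonoid M] {f : ι → M} (hf : ∀ i ∈ s, 0 ≤ f i) (t : M) :
    #{i ∈ s | t < f i} • t ≤ ∑ i ∈ s, f i :=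
  calc #{i ∈ s | t < f i} • t ≤ ∑ i ∈ s with t < f i, f i :=
        card_nsmul_le_sum _ _ _ fun _ hi => (mem_filter.1 hi).2.le
    _ ≤ ∑ i ∈ s, f i := sum_le_sum_of_subset_of_nonneg (filter_subset _ _) fun i hi _ => hf i hi

variable {f : ι → ℝ}

theorem card_filter_lt_le_of_sum_le_mul_sq (hf : ∀ i ∈ s, 0 ≤ f i) {N ε t : ℝ} (hε : 0 ≤ ε)
    (hεt : ε ≤ t) (hsum : ∑ i ∈ s, f i ≤ N * ε ^ 2) : (#{i ∈ s | t < f i} : ℝ) ≤ N * ε := by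
  rcases hε.eq_or_lt with rfl | hε
  · have hzero : ∀ i ∈ s, f i = 0 :=
      (sum_eq_zero_iff_of_nonneg hf).1 (le_antisymm (by simpa using hsum) (sum_nonneg hf))
    have hempty : {i ∈ s | t < f i} = ∅ :=
      filter_eq_empty_iff.2 fun i hi => by simpa [hzero i hi] using hεt
    simp [hempty]
  · refine le_of_mul_le_mul_right ?_ hε
    calc (#{i ∈ s | t < f i} : ℝ) * ε ≤ #{i ∈ s | t < f i} * t := by gcongr
      _ ≤ ∑ i ∈ s, f i := by simpa only [nsmul_eq_mul] using card_filter_lt_nsmul_le_sum hf t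
      _ ≤ N * ε * ε := hsum.trans_eq (by ring)

theorem one_sub_sqrt_expect_le_card_filter_le_div (hs : s.Nonempty) (hf : ∀ i ∈ s, 0 ≤ f i)
    {t : ℝ} (ht : √(𝔼 i ∈ s, f i) ≤ t) :
    1 - √(𝔼 i ∈ s, f i) ≤ #{i ∈ s | f i ≤ t} / #s := by
  have hcard : (0 : ℝ) < #s := by exact_mod_cast hs.card_pos
  have hsum : ∑ i ∈ s, f i = #s * √(𝔼 i ∈ s, f i) ^ 2 := by
    rw [Real.sq_sqrt (expect_nonneg hf), card_mul_expect]
  have hbad := card_filter_lt_le_of_sum_le_mul_sq hf (Real.sqrt_nonneg _) ht hsum.le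
  have hsplit : (#{i ∈ s | f i ≤ t} : ℝ) + #{i ∈ s | t < f i} = #s := by
    have := card_filter_add_card_filter_not (s := s) (f · ≤ t)
    simp only [not_le] at this
    exact_mod_cast this
  rw [le_div_iff₀ hcard]
  linarith

end MeanThreshold

/-- Averaging selection lemma: for a triangular array of nonnegative reals whose
averages tend to zero, one can select nonempty index sets `K_n` of asymptotically
full density on which the values tend to zero uniformly. -/
theorem converging_averages (x : (n : ℕ) → Fin (n + 1) → ℝ)
    (hnonneg : ∀ n i, 0 ≤ x n i)
    (havg : Tendsto (fun n => (∑ i, x n i) / (n + 1 : ℝ)) atTop (nhds 0)) :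
    ∃ K : (n : ℕ) → Finset (Fin (n + 1)), ∃ hne : ∀ n, (K n).Nonempty,
      Tendsto (fun n => ((K n).card : ℝ) / (n + 1 : ℝ)) atTop (nhds 1) ∧
      Tendsto (fun n => (K n).sup' (hne n) (x n)) atTop (nhds 0) := by
  set a : ℕ → ℝ := fun n => 𝔼 i, x n i
  have ha : Tendsto a atTop (nhds 0) := by
    simpa [a, expect_eq_sum_div_card] using havg
  have hsqrt : Tendsto (fun n => √(a n)) atTop (nhds 0) := by
    simpa using ha.sqrt
  let K n : Finset (Fin (n + 1)) := {i | x n i ≤ a n + √(a n)}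
  have hne n : (K n).Nonempty := by
    obtain ⟨i, -, hi⟩ := exists_le_of_expect_le (f := x n) univ_nonempty le_rfl
    exact ⟨i, mem_filter.2 ⟨mem_univ i, hi.trans (le_add_of_nonneg_right (Real.sqrt_nonneg _))⟩⟩
  refine ⟨K, hne, ?_, ?_⟩
  · refine tendsto_of_tendsto_of_tendsto_of_le_of_le (by simpa using hsqrt.const_sub 1)
      tendsto_const_nhds (fun n => ?_) (fun n => ?_)
    · simpa [K] using one_sub_sqrt_expect_le_card_filter_le_div (f := x n) univ_nonempty
        (fun i _ => hnonneg n i) (le_add_of_nonneg_left (expect_nonneg fun i _ => hnonneg n i))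
    · beta_reduce
      rw [div_le_one (by positivity)]
      have hle : #(K n) ≤ n + 1 := by simpa using card_le_univ (K n)
      exact_mod_cast hle
  · refine squeeze_zero (fun n => (hnonneg n _).trans (le_sup'_of_le _ (hne n).choose_spec le_rfl))
      (fun n => sup'_le _ _ fun i hi => (mem_filter.1 hi).2) (by simpa using ha.add hsqrt)
end

section
/- Let T be a finite tree, and suppose for each n we have symmetric nonnegative weights p_n(i,j) on {1,...,n}² with sup_{i,j} p_n(i,j) ≤ ε_n² where ε_n → 0, rows bounded: ∑_j p_n(i,j) ≤ C, and row sums converging to 1 in average: (1/n)·∑_{i=1}^n |∑_{j=1}^n p_n(i,j) − 1| → 0. Then (1/n)·∑_{F : V(T) → {1,...,n} injective} ∏_{e ∈ E(T)} p_n(F(x_e), F(y_e)) → 1 as n → ∞. -/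
open Finset Filter
open scoped Classical

/-!
Peel off a leaf `v` of the tree, attached to `u`. For an injective labelling `F'` of the smaller
tree, the free labels `j ∉ range F'` of `v` contribute `∑ j, p (F' u) j - ∑ x, p (F' u) (F' x)`:
the row sum at `F' u` up to an error of at most `|V| ε²`. Because rows are bounded by `C`, the
labellings (injective or not) of a tree with a prescribed label at one vertex have total weight at
most `C ^ (|V| - 1)`; hence replacing each row sum by `1` and dropping the `|V| ε²` errors costs
`O(∑ i, |row i - 1| + n |V| ε²) = o(n)` in total. So removing a leaf changes the injective sum by
`o(n)`, and a single vertex has `n` labellings.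
-/

lemma Finset.sum_compl_image_eq_sub {β γ M : Type*} [Fintype β] [Fintype γ] [DecidableEq γ]
    [AddCommGroup M] {f : β → γ} (hf : f.Injective) (h : γ → M) :
    ∑ j ∈ (univ.image f)ᶜ, h j = ∑ j, h j - ∑ x, h (f x) := by
  rw [← sum_compl_add_sum (univ.image f) h, sum_image fun x _ y _ hxy => hf hxy,
    add_sub_cancel_right]

lemma Function.injective_iff_injective_compl_singleton {V α : Type*} (v : V) (F : V → α) :
    F.Injective ↔
      (fun x : ({v}ᶜ : Set V) => F x).Injective ∧ ∀ x : ({v}ᶜ : Set V), F x ≠ F v := by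
  constructor
  · intro hF
    exact ⟨fun x y h => Subtype.ext (hF h), fun x h => x.2 (hF h)⟩
  · rintro ⟨hF', hv⟩ x y h
    by_cases hx : x = v <;> by_cases hy : y = v
    · rw [hx, hy]
    · exact absurd (hx ▸ h).symm (hv ⟨y, hy⟩)
    · exact absurd (hy ▸ h) (hv ⟨x, hx⟩)
    · exact congrArg Subtype.val (@hF' ⟨x, hx⟩ ⟨y, hy⟩ h)

lemma Fintype.sum_fun_eq_sum_sum_compl_singleton {V α M : Type*} [Fintype V] [DecidableEq V]
    [Fintype α] [AddCommMonoid M] (v : V) (g : α → (({v}ᶜ : Set V) → α) → M) :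
    ∑ F : V → α, g (F v) (fun x => F x) = ∑ F' : ({v}ᶜ : Set V) → α, ∑ j, g j F' := by
  rw [Finset.sum_comm, ← Fintype.sum_prod_type']
  exact Fintype.sum_equiv (Equiv.funSplitAt v α) _ _ fun F => rfl

namespace SimpleGraph

variable {V α : Type*} [Fintype V] {G : SimpleGraph V}

lemma IsTree.exists_leaf_ne [Nontrivial V] (hT : G.IsTree) (r : V) :
    ∃ v u, v ≠ r ∧ G.Adj v u ∧ ∀ x, G.Adj v x → x = u := by
  obtain ⟨v₁, v₂, hne, h₁, h₂⟩ := hT.exists_ne_and_degree_eq_one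
  obtain ⟨v, hvr, hv⟩ : ∃ v, v ≠ r ∧ G.degree v = 1 := by
    by_cases h : v₁ = r
    · exact ⟨v₂, h ▸ hne.symm, h₂⟩
    · exact ⟨v₁, h, h₁⟩
  obtain ⟨u, hvu, hleaf⟩ := degree_eq_one_iff_existsUnique_adj.mp hv
  exact ⟨v, u, hvr, hvu, hleaf⟩

lemma IsTree.induce_compl_singleton (hT : G.IsTree) {v u : V} (hvu : G.Adj v u)
    (hleaf : ∀ x, G.Adj v x → x = u) : (G.induce {v}ᶜ).IsTree :=
  ⟨hT.connected.induce_compl_singleton_of_degree_eq_one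
    (degree_eq_one_iff_existsUnique_adj.mpr ⟨u, hvu, hleaf⟩), hT.isAcyclic.induce _⟩

lemma prod_edgeFinset_eq_mul_prod_induce_compl [DecidableEq V] {M : Type*} [CommMonoid M]
    {v u : V} (hvu : G.Adj v u) (hleaf : ∀ x, G.Adj v x → x = u) (f : Sym2 V → M) :
    ∏ e ∈ G.edgeFinset, f e = f s(u, v) * ∏ e ∈ (G.induce {v}ᶜ).edgeFinset, f (e.map (↑)) := by
  have hinc : {e ∈ G.edgeFinset | v ∈ e} = {s(u, v)} := by
    ext e
    induction e using Sym2.ind with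
    | _ a b =>
      simp only [mem_filter, mem_edgeFinset, mem_edgeSet, Sym2.mem_iff, mem_singleton]
      constructor
      · rintro ⟨hab, rfl | rfl⟩
        · rw [hleaf b hab, Sym2.eq_swap]
        · rw [hleaf a hab.symm]
      · intro h
        rcases Sym2.eq_iff.mp h with ⟨rfl, rfl⟩ | ⟨rfl, rfl⟩
        · exact ⟨hvu.symm, Or.inr rfl⟩
        · exact ⟨hvu, Or.inl rfl⟩
  have hrest : {e ∈ G.edgeFinset | v ∉ e} =
      (G.induce {v}ᶜ).edgeFinset.map (Function.Embedding.subtype (· ∈ ({v}ᶜ : Set V))).sym2Map := by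
    rw [map_edgeFinset_induce]
    ext e
    simp only [mem_filter, mem_inter, Finset.mem_sym2_iff, Set.mem_toFinset, Set.mem_compl_iff,
      Set.mem_singleton_iff]
    exact and_congr_right fun _ => ⟨fun hv a ha hav => hv (hav ▸ ha), fun h hv => h v hv rfl⟩
  rw [← prod_filter_mul_prod_filter_not G.edgeFinset (v ∈ ·), hinc, hrest, prod_singleton,
    prod_map]
  rfl

noncomputable def labelWeight (G : SimpleGraph V) (w : Sym2 α → ℝ) (F : V → α) : ℝ :=
  ∏ e ∈ G.edgeFinset, w (e.map F)

noncomputable def injWeight [DecidableEq V] [Fintype α] (G : SimpleGraph V) (w : Sym2 α → ℝ) :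
    ℝ :=
  ∑ F : V → α with F.Injective, G.labelWeight w F

variable {w : Sym2 α → ℝ}

lemma labelWeight_nonneg (hw : ∀ s, 0 ≤ w s) (F : V → α) : 0 ≤ G.labelWeight w F :=
  prod_nonneg fun _ _ => hw _

lemma labelWeight_of_subsingleton [Subsingleton V] (w : Sym2 α → ℝ) (F : V → α) :
    G.labelWeight w F = 1 := by
  have : G.edgeFinset = ∅ := by
    ext e
    induction e using Sym2.ind with
    | _ a b =>
      simp only [mem_edgeFinset, mem_edgeSet, Finset.notMem_empty, iff_false]
      exact fun h => h.ne (Subsingleton.elim a b)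
  simp [labelWeight, this]

section Leaf

variable [DecidableEq V] {v u : V}

lemma labelWeight_eq_mul_labelWeight_induce_compl (hvu : G.Adj v u)
    (hleaf : ∀ x, G.Adj v x → x = u) (w : Sym2 α → ℝ) (F : V → α) :
    G.labelWeight w F = w s(F u, F v) * (G.induce {v}ᶜ).labelWeight w (fun x => F x) := by
  simp only [labelWeight, prod_edgeFinset_eq_mul_prod_induce_compl hvu hleaf, Sym2.map_mk,
    Sym2.map_map]
  rfl

variable [Fintype α]

lemma injWeight_eq_sum_induce_compl (hvu : G.Adj v u) (hleaf : ∀ x, G.Adj v x → x = u) :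
    G.injWeight w = ∑ F' : ({v}ᶜ : Set V) → α with F'.Injective,
      (G.induce {v}ᶜ).labelWeight w F' *
        (∑ j, w s(F' ⟨u, hvu.ne'⟩, j) - ∑ x, w s(F' ⟨u, hvu.ne'⟩, F' x)) := by
  let u' : ({v}ᶜ : Set V) := ⟨u, hvu.ne'⟩
  calc G.injWeight w
      = ∑ F' : ({v}ᶜ : Set V) → α, ∑ j,
          if F'.Injective ∧ ∀ x, F' x ≠ j then
            w s(F' u', j) * (G.induce {v}ᶜ).labelWeight w F' else 0 := by
        rw [injWeight, sum_filter]
        simp_rw [Function.injective_iff_injective_compl_singleton v,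
          labelWeight_eq_mul_labelWeight_induce_compl hvu hleaf]
        exact Fintype.sum_fun_eq_sum_sum_compl_singleton v fun j F' =>
          if F'.Injective ∧ ∀ x, F' x ≠ j then
            w s(F' u', j) * (G.induce {v}ᶜ).labelWeight w F' else 0
    _ = _ := by
        rw [sum_filter]
        refine sum_congr rfl fun F' _ => ?_
        by_cases hF' : F'.Injective
        · simp only [hF', true_and, if_true]
          rw [← sum_filter, ← Finset.sum_compl_image_eq_sub hF', mul_sum]
          exact sum_congr (by ext; simp) fun _ _ => mul_comm _ _
        · simp [hF']

end Leaf

variable [DecidableEq V] [Fintype α]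

theorem sum_labelWeight_mul_le (hT : G.IsTree) (hw : ∀ s, 0 ≤ w s) {C : ℝ} (hC : 0 ≤ C)
    (hrow : ∀ i, ∑ j, w s(i, j) ≤ C) (r : V) {g : α → ℝ} (hg : ∀ i, 0 ≤ g i) :
    ∑ F : V → α, G.labelWeight w F * g (F r) ≤ C ^ (Fintype.card V - 1) * ∑ i, g i := by
  induction h : Fintype.card V using Nat.strong_induction_on generalizing V with
  | _ k ih =>
  subst h
  rcases subsingleton_or_nontrivial V with hV | hV
  · have : Unique V := _root_.uniqueOfSubsingleton r
    simp only [labelWeight_of_subsingleton, one_mul, Fintype.card_unique, tsub_self, pow_zero]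
    exact (Fintype.sum_equiv (Equiv.funUnique V α) _ _ fun F => by simp [Unique.eq_default r]).le
  obtain ⟨v, u, hvr, hvu, hleaf⟩ := hT.exists_leaf_ne r
  have hcard : Fintype.card ({v}ᶜ : Set V) + 1 = Fintype.card V := by
    rw [Fintype.card_compl_set, Set.card_singleton]
    exact Nat.sub_add_cancel Fintype.card_pos
  set G' := G.induce {v}ᶜ
  let u' : ({v}ᶜ : Set V) := ⟨u, hvu.ne'⟩
  let r' : ({v}ᶜ : Set V) := ⟨r, hvr.symm⟩
  have hG' := ih _ (by omega) (hT.induce_compl_singleton hvu hleaf) r' rfl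
  have hu' : 1 ≤ Fintype.card ({v}ᶜ : Set V) := Fintype.card_pos_iff.mpr ⟨u'⟩
  calc ∑ F : V → α, G.labelWeight w F * g (F r)
      = ∑ F' : ({v}ᶜ : Set V) → α, (∑ j, w s(F' u', j)) * (G'.labelWeight w F' * g (F' r')) := by
        simp_rw [labelWeight_eq_mul_labelWeight_induce_compl hvu hleaf, sum_mul, mul_assoc]
        exact Fintype.sum_fun_eq_sum_sum_compl_singleton v
          fun j F' => w s(F' u', j) * (G'.labelWeight w F' * g (F' r'))
    _ ≤ ∑ F' : ({v}ᶜ : Set V) → α, C * (G'.labelWeight w F' * g (F' r')) := by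
        gcongr with F'
        · exact mul_nonneg (labelWeight_nonneg hw F') (hg _)
        · exact hrow _
    _ = C * ∑ F' : ({v}ᶜ : Set V) → α, G'.labelWeight w F' * g (F' r') := (mul_sum ..).symm
    _ ≤ C * (C ^ (Fintype.card ({v}ᶜ : Set V) - 1) * ∑ i, g i) :=
        mul_le_mul_of_nonneg_left hG' hC
    _ = C ^ (Fintype.card V - 1) * ∑ i, g i := by
        rw [← mul_assoc, ← pow_succ', ← hcard]
        congr 2
        omega

lemma abs_injWeight_sub_injWeight_induce_le (hT : G.IsTree) (hw : ∀ s, 0 ≤ w s) {E : ℝ}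
    (hE : 0 ≤ E) (hwE : ∀ s, w s ≤ E) {C : ℝ} (hC : 0 ≤ C) (hrow : ∀ i, ∑ j, w s(i, j) ≤ C)
    {v u : V} (hvu : G.Adj v u) (hleaf : ∀ x, G.Adj v x → x = u) :
    |G.injWeight w - (G.induce {v}ᶜ).injWeight w| ≤
      C ^ (Fintype.card ({v}ᶜ : Set V) - 1) *
        (∑ i, |∑ j, w s(i, j) - 1| + Fintype.card α * Fintype.card ({v}ᶜ : Set V) * E) := by
  set k' := Fintype.card ({v}ᶜ : Set V)
  set G' := G.induce {v}ᶜ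
  let u' : ({v}ᶜ : Set V) := ⟨u, hvu.ne'⟩
  let R : α → ℝ := fun i => ∑ j, w s(i, j)
  have hdefect : ∀ F' : ({v}ᶜ : Set V) → α,
      |R (F' u') - ∑ x, w s(F' u', F' x) - 1| ≤ |R (F' u') - 1| + k' * E := by
    intro F'
    have h0 : 0 ≤ ∑ x, w s(F' u', F' x) := sum_nonneg fun _ _ => hw _
    have hk : ∑ x, w s(F' u', F' x) ≤ k' * E :=
      (sum_le_sum fun _ _ => hwE _).trans_eq (by rw [sum_const, card_univ, nsmul_eq_mul])
    exact abs_le.mpr ⟨by linarith [neg_abs_le (R (F' u') - 1)],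
      by linarith [le_abs_self (R (F' u') - 1)]⟩
  rw [injWeight_eq_sum_induce_compl hvu hleaf, injWeight, ← sum_sub_distrib]
  calc _ ≤ ∑ F' : ({v}ᶜ : Set V) → α with F'.Injective,
        |G'.labelWeight w F' * (R (F' u') - ∑ x, w s(F' u', F' x)) - G'.labelWeight w F'| :=
        abs_sum_le_sum_abs _ _
    _ ≤ ∑ F' : ({v}ᶜ : Set V) → α with F'.Injective,
        G'.labelWeight w F' * (|R (F' u') - 1| + k' * E) := by
      refine sum_le_sum fun F' _ => ?_
      rw [← mul_sub_one, abs_mul, abs_of_nonneg (labelWeight_nonneg hw F')]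
      exact mul_le_mul_of_nonneg_left (hdefect F') (labelWeight_nonneg hw F')
    _ ≤ ∑ F' : ({v}ᶜ : Set V) → α, G'.labelWeight w F' * (|R (F' u') - 1| + k' * E) :=
      sum_le_sum_of_subset_of_nonneg (filter_subset _ _) fun F' _ _ =>
        mul_nonneg (labelWeight_nonneg hw F') (by positivity)
    _ ≤ C ^ (k' - 1) * ∑ i, (|R i - 1| + k' * E) :=
      sum_labelWeight_mul_le (hT.induce_compl_singleton hvu hleaf) hw hC hrow u'
        (g := fun i => |R i - 1| + k' * E) fun _ => by positivity
    _ = _ := by rw [sum_add_distrib, sum_const, card_univ, nsmul_eq_mul, mul_assoc]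

theorem abs_injWeight_sub_card_le (hT : G.IsTree) (hw : ∀ s, 0 ≤ w s) {E : ℝ}
    (hE : 0 ≤ E) (hwE : ∀ s, w s ≤ E) {C : ℝ} (hC : 1 ≤ C) (hrow : ∀ i, ∑ j, w s(i, j) ≤ C) :
    |G.injWeight w - Fintype.card α| ≤ Fintype.card V * C ^ Fintype.card V *
      (∑ i, |∑ j, w s(i, j) - 1| + Fintype.card α * Fintype.card V * E) := by
  induction h : Fintype.card V using Nat.strong_induction_on generalizing V with
  | _ k ih =>
  subst h
  rcases subsingleton_or_nontrivial V with hV | hV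
  · have : Unique V := _root_.uniqueOfSubsingleton hT.connected.nonempty.some
    have hS : G.injWeight w = Fintype.card α := by
      simp [injWeight, labelWeight_of_subsingleton, Function.injective_of_subsingleton]
    rw [hS, sub_self, abs_zero]
    positivity
  obtain ⟨v, u, -, hvu, hleaf⟩ := hT.exists_leaf_ne hT.connected.nonempty.some
  have hcard : Fintype.card ({v}ᶜ : Set V) + 1 = Fintype.card V := by
    rw [Fintype.card_compl_set, Set.card_singleton]
    exact Nat.sub_add_cancel Fintype.card_pos
  set k' := Fintype.card ({v}ᶜ : Set V)
  set D := ∑ i, |∑ j, w s(i, j) - 1|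
  have hk' : (k' : ℝ) ≤ Fintype.card V := by rw [← hcard]; push_cast; linarith
  calc |G.injWeight w - Fintype.card α|
      ≤ |G.injWeight w - (G.induce {v}ᶜ).injWeight w| +
          |(G.induce {v}ᶜ).injWeight w - Fintype.card α| := abs_sub_le _ _ _
    _ ≤ C ^ (k' - 1) * (D + Fintype.card α * k' * E) +
          k' * C ^ k' * (D + Fintype.card α * k' * E) :=
        add_le_add
          (abs_injWeight_sub_injWeight_induce_le hT hw hE hwE (by linarith) hrow hvu hleaf)
          (ih _ (by omega) (hT.induce_compl_singleton hvu hleaf) rfl)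
    _ ≤ C ^ Fintype.card V * (D + Fintype.card α * Fintype.card V * E) +
          k' * C ^ Fintype.card V * (D + Fintype.card α * Fintype.card V * E) := by
        gcongr <;> omega
    _ = _ := by rw [← hcard]; push_cast; ring

end SimpleGraph

lemma tendsto_div_natCast_of_abs_sub_le {a b c : ℕ → ℝ} {K L : ℝ}
    (h : ∀ n, |a n - n| ≤ K * (b n + n * L * c n))
    (hb : Tendsto (fun n => b n / n) atTop (nhds 0)) (hc : Tendsto c atTop (nhds 0)) :
    Tendsto (fun n => a n / n) atTop (nhds 1) := by
  rw [← tendsto_sub_nhds_zero_iff]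
  have hlim : Tendsto (fun n => K * (b n / n + L * c n)) atTop (nhds 0) := by
    simpa using (hb.add (hc.const_mul L)).const_mul K
  refine squeeze_zero_norm' ?_ hlim
  filter_upwards [eventually_gt_atTop 0] with n hn
  have hn' : (0 : ℝ) < n := Nat.cast_pos.mpr hn
  rw [Real.norm_eq_abs, div_sub_one hn'.ne', abs_div, abs_of_pos hn', div_le_iff₀ hn']
  calc |a n - n| ≤ K * (b n + n * L * c n) := h n
    _ = K * (b n / n + L * c n) * n := by field_simp

/-- Each tree contributes one: for symmetric nonnegative weights `p_n(i,j)` with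
`sup_{i,j} p_n(i,j) ≤ ε_n² → 0`, bounded row sums `∑_j p_n(i,j) ≤ C`, and row sums
converging to `1` in average, the normalized sum over injections
`F : V(T) → {1,…,n}` of `∏_{e ∈ E(T)} p_n(F(x_e), F(y_e))` tends to `1`. -/
theorem tree_contributes_one {V : Type*} [Fintype V]
    (G : SimpleGraph V) (hT : G.IsTree)
    (p : (n : ℕ) → Fin n → Fin n → ℝ)
    (hsymm : ∀ n i j, p n i j = p n j i)
    (hnonneg : ∀ n i j, 0 ≤ p n i j)
    (ε : ℕ → ℝ) (hε0 : Tendsto ε atTop (nhds 0))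
    (hsup : ∀ n i j, p n i j ≤ (ε n) ^ 2)
    (C : ℝ) (hrow : ∀ n i, ∑ j, p n i j ≤ C)
    (havg : Tendsto (fun n => (∑ i, |(∑ j, p n i j) - 1|) / n) atTop (nhds 0)) :
    Tendsto (fun n =>
        (∑ F ∈ Finset.univ.filter (fun F : V → Fin n => Function.Injective F),
          ∏ e ∈ G.edgeFinset,
            Sym2.lift ⟨fun a b => p n (F a) (F b), fun a b => hsymm n _ _⟩ e) / n)
      atTop (nhds 1) := by
  let w n : Sym2 (Fin n) → ℝ := Sym2.lift ⟨p n, hsymm n⟩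
  have hw_mk : ∀ n i j, w n s(i, j) = p n i j := fun _ _ _ => Sym2.lift_mk ..
  have hw : ∀ n s, 0 ≤ w n s := fun n s => s.ind fun i j => (hw_mk n i j).symm ▸ hnonneg n i j
  have hwE : ∀ n s, w n s ≤ ε n ^ 2 := fun n s => s.ind fun i j => (hw_mk n i j).symm ▸ hsup n i j
  have hrow' : ∀ n i, ∑ j, w n s(i, j) ≤ max C 1 := fun n i => by
    simpa only [hw_mk] using (hrow n i).trans (le_max_left C 1)
  refine tendsto_div_natCast_of_abs_sub_le (K := Fintype.card V * max C 1 ^ Fintype.card V)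
    (L := Fintype.card V) (fun n => ?_) havg (by simpa using hε0.pow 2)
  convert G.abs_injWeight_sub_card_le hT (hw n) (sq_nonneg (ε n)) (hwE n) (le_max_right C 1)
    (hrow' n) using 3
  · exact sum_congr (by ext; simp) fun F _ => by
      simp only [SimpleGraph.labelWeight, w, Sym2.lift_map_apply]
  · simp
  · simp only [hw_mk]
  · simp
end

section
/- Suppose a triangular array of symmetric nonnegative weights p_n(i,j) on {1,...,n}² satisfies: for any J_n ⊆ {1,...,n} with |J_n|/n → 0, one has (1/n)·∑_{i ∈ J_n} ∑_{j=1}^n p_n(i,j) → 0. Then for every ε ∈ (0,1) there exist C < ∞ and subsets K_n ⊆ {1,...,n} with |K_n| ≥ (1−ε)n such that ∑_{j=1}^n p_n(i,j) ≤ C for all n and all i ∈ K_n. -/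
/-!
If the conclusion failed, then for every level `k` there would be arbitrarily large `n` with
more than `εn` rows of sum above `k`. A diagonal choice yields levels `L n → ∞` such that this
happens at `L n` for infinitely many `n`. Keeping only `⌈εn / L n⌉` of those heavy rows gives a
set of density about `ε / L n → 0` whose rows still carry total mass at least `εn`,
contradicting the hypothesis.
-/

open Filter Finset Topology

/-- Condition (4) of the paper, stated for the row sums `r n i = ∑ j, p n i j`. -/
def NoHeavySparseSets (r : (n : ℕ) → Fin n → ℝ) : Prop :=
  ∀ J : (n : ℕ) → Finset (Fin n),
    Tendsto (fun n => ((J n).card : ℝ) / n) atTop (𝓝 0) →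
    Tendsto (fun n => (∑ i ∈ J n, r n i) / n) atTop (𝓝 0)

theorem frequently_atTop_of_antitone {P : ℕ → ℕ → Prop} (hanti : ∀ n, Antitone fun k => P k n)
    (hfin : ∀ n, ∃ k, ¬ P k n) (h : ∀ k, ∃ n, P k n) (k : ℕ) : ∃ᶠ n in atTop, P k n := by
  rw [frequently_atTop]
  intro N
  choose K hK using hfin
  obtain ⟨n, hn⟩ := h (max k ((range N).sup K))
  refine ⟨n, ?_, hanti n (le_max_left _ _) hn⟩
  by_contra! hlt
  exact hK n (hanti n ((le_sup (mem_range.2 hlt)).trans (le_max_right _ _)) hn)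

theorem exists_tendsto_atTop_frequently {P : ℕ → ℕ → Prop} (h : ∀ k, ∃ᶠ n in atTop, P k n) :
    ∃ L : ℕ → ℕ, Tendsto L atTop atTop ∧ ∃ᶠ n in atTop, P (L n) n := by
  obtain ⟨φ, hφ, hP⟩ := extraction_forall_of_frequently h
  set L : ℕ → ℕ := fun n => Nat.findGreatest (fun k => φ k ≤ n) n
  have hLφ : ∀ k, L (φ k) = k := fun k =>
    le_antisymm
      (hφ.le_iff_le.1 (Nat.findGreatest_spec (P := fun j => φ j ≤ φ k) (hφ.id_le k) le_rfl))
      (Nat.le_findGreatest (hφ.id_le k) le_rfl)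
  refine ⟨L, tendsto_atTop_atTop.2 fun k => ⟨φ k, fun n hn => ?_⟩, ?_⟩
  · exact Nat.le_findGreatest ((hφ.id_le k).trans hn) hn
  · exact frequently_atTop.2 fun N => ⟨φ N, hφ.id_le N, by rw [hLφ]; exact hP N⟩

theorem exists_subset_card_lt_le_sum {ι : Type*} {s : Finset ι} {f : ι → ℝ} {a k : ℝ}
    (hk : 0 < k) (ha : 0 ≤ a) (hs : a / k ≤ #s) (hf : ∀ i ∈ s, k ≤ f i) :
    ∃ t ⊆ s, (#t : ℝ) < a / k + 1 ∧ a ≤ ∑ i ∈ t, f i := by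
  obtain ⟨t, hts, ht⟩ := exists_subset_card_eq (Nat.ceil_le.2 hs)
  refine ⟨t, hts, ht ▸ Nat.ceil_lt_add_one (by positivity), ?_⟩
  calc a = a / k * k := (div_mul_cancel₀ a hk.ne').symm
    _ ≤ #t * k := by rw [ht]; gcongr; exact Nat.le_ceil _
    _ = ∑ _i ∈ t, k := by rw [sum_const, nsmul_eq_mul]
    _ ≤ ∑ i ∈ t, f i := sum_le_sum fun i hi => hf i (hts hi)

namespace NoHeavySparseSets

variable {r : (n : ℕ) → Fin n → ℝ} {ε : ℝ}

theorem eventually_card_heavy_le (h : NoHeavySparseSets r) (hε : 0 < ε) {L : ℕ → ℕ}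
    (hL : Tendsto L atTop atTop) :
    ∀ᶠ n in atTop, (#{i | (L n + 1 : ℝ) < r n i} : ℝ) ≤ ε * n := by
  have hJ : ∀ n, ∃ A : Finset (Fin n), (#A : ℝ) < ε * n / (L n + 1) + 1 ∧
      (ε * n < #{i | (L n + 1 : ℝ) < r n i} → ε * n ≤ ∑ i ∈ A, r n i) := by
    intro n
    by_cases hn : ε * n < #{i | (L n + 1 : ℝ) < r n i}
    · have hs : ε * n / (L n + 1) ≤ #{i | (L n + 1 : ℝ) < r n i} :=
        (div_le_self (by positivity) (by simp)).trans hn.le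
      obtain ⟨A, -, hcard, hsum⟩ := exists_subset_card_lt_le_sum (by positivity) (by positivity)
        hs fun i hi => (mem_filter.1 hi).2.le
      exact ⟨A, hcard, fun _ => hsum⟩
    · exact ⟨∅, by simp only [card_empty, Nat.cast_zero]; positivity, fun h => absurd h hn⟩
  choose J hJcard hJsum using hJ
  have hlevel : Tendsto (fun n => ε / (L n + 1) + 1 / n) atTop (𝓝 0) := by
    simpa using ((tendsto_atTop_add_const_right _ 1
      (tendsto_natCast_atTop_atTop.comp hL)).const_div_atTop ε).add
      tendsto_one_div_atTop_nhds_zero_nat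
  have hsparse : Tendsto (fun n => (#(J n) : ℝ) / n) atTop (𝓝 0) := by
    refine squeeze_zero' (Eventually.of_forall fun n => by positivity) ?_ hlevel
    filter_upwards [eventually_gt_atTop 0] with n hn
    have hn' : (0 : ℝ) < n := by exact_mod_cast hn
    rw [div_le_iff₀ hn']
    calc (#(J n) : ℝ) ≤ ε * n / (L n + 1) + 1 := (hJcard n).le
      _ = (ε / (L n + 1) + 1 / n) * n := by field_simp
  filter_upwards [(h J hsparse).eventually (gt_mem_nhds hε), eventually_gt_atTop 0]
    with n hlt hn
  by_contra! hheavy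
  rw [div_lt_iff₀ (by exact_mod_cast hn)] at hlt
  linarith [hJsum n hheavy]

theorem exists_bound (h : NoHeavySparseSets r) (hε : 0 < ε) :
    ∃ C : ℝ, ∀ n, (1 - ε) * n ≤ (#{i | r n i ≤ C} : ℝ) := by
  by_contra! hcon
  have hheavy : ∀ k : ℕ, ∃ n, ε * n < #{i | (k + 1 : ℝ) < r n i} := by
    intro k
    obtain ⟨n, hn⟩ := hcon (k + 1)
    have hsplit : (#{i | r n i ≤ k + 1} + #{i | (k + 1 : ℝ) < r n i} : ℝ) = n := by
      have := card_filter_add_card_filter_not (s := univ) fun i => r n i ≤ k + 1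
      simp only [not_le, card_univ, Fintype.card_fin] at this
      exact_mod_cast this
    exact ⟨n, by linarith⟩
  have hanti : ∀ n, Antitone fun k : ℕ => ε * n < #{i | (k + 1 : ℝ) < r n i} :=
    fun n k k' hkk' hk' => hk'.trans_le <| by gcongr with i _ hi
  have hfin : ∀ n, ∃ k : ℕ, ¬ ε * n < #{i | (k + 1 : ℝ) < r n i} := by
    intro n
    obtain ⟨M, hM⟩ := (Set.finite_range (r n)).bddAbove
    obtain ⟨k, hk⟩ := exists_nat_ge M
    refine ⟨k, ?_⟩
    rw [filter_false_of_mem fun i _ => not_lt.2 ((hM ⟨i, rfl⟩).trans (by linarith))]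
    simp only [card_empty, Nat.cast_zero, not_lt]
    positivity
  obtain ⟨L, hL, hfreq⟩ :=
    exists_tendsto_atTop_frequently (frequently_atTop_of_antitone hanti hfin hheavy)
  obtain ⟨n, hgt, hle⟩ := (hfreq.and_eventually (h.eventually_card_heavy_le hε hL)).exists
  exact hle.not_gt hgt

end NoHeavySparseSets

theorem almost_bounded_rows_general (p : (n : ℕ) → Fin n → Fin n → ℝ)
    (hmargin : ∀ J : (n : ℕ) → Finset (Fin n),
      Tendsto (fun n => ((J n).card : ℝ) / n) atTop (nhds 0) →
      Tendsto (fun n => (∑ i ∈ J n, ∑ j, p n i j) / n) atTop (nhds 0)) :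
    ∀ ε : ℝ, 0 < ε → ε < 1 →
      ∃ C : ℝ, ∃ K : (n : ℕ) → Finset (Fin n),
        (∀ n, (1 - ε) * n ≤ ((K n).card : ℝ)) ∧
        (∀ n, ∀ i ∈ K n, ∑ j, p n i j ≤ C) := by
  intro ε hε _
  obtain ⟨C, hC⟩ := NoHeavySparseSets.exists_bound (r := fun n i => ∑ j, p n i j) hmargin hε
  exact ⟨C, fun n => {i | ∑ j, p n i j ≤ C}, hC, fun n i hi => (mem_filter.1 hi).2⟩

/-- Almost bounded rows: if a triangular array of symmetric nonnegative weights
has no heavy sparse row sets (for every `J_n` with `|J_n|/n → 0` one has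
`(1/n)∑_{i∈J_n}∑_j p_n(i,j) → 0`), then for every `ε ∈ (0,1)` there are `C < ∞`
and sets `K_n` with `|K_n| ≥ (1−ε)n` on which row sums are bounded by `C`. -/
theorem almost_bounded_rows (p : (n : ℕ) → Fin n → Fin n → ℝ)
    (hsymm : ∀ n i j, p n i j = p n j i)
    (hnonneg : ∀ n i j, 0 ≤ p n i j)
    (hmargin : ∀ J : (n : ℕ) → Finset (Fin n),
      Tendsto (fun n => ((J n).card : ℝ) / n) atTop (nhds 0) →
      Tendsto (fun n => (∑ i ∈ J n, ∑ j, p n i j) / n) atTop (nhds 0)) :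
    ∀ ε : ℝ, 0 < ε → ε < 1 →
      ∃ C : ℝ, ∃ K : (n : ℕ) → Finset (Fin n),
        (∀ n, (1 - ε) * n ≤ ((K n).card : ℝ)) ∧
        (∀ n, ∀ i ∈ K n, ∑ j, p n i j ≤ C) :=
  almost_bounded_rows_general p hmargin
end

section
/- Let A and B be n×n Hermitian matrices with empirical spectral CDFs F_A and F_B. Then L(F_A, F_B)³ ≤ (1/n)·tr((A − B)²), where L denotes the Lévy metric on distribution functions. -/
/-!
Hoffman–Wielandt: some permutation `σ` pairs the eigenvalues `λ i` of `A` with the eigenvalues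
`μ (σ i)` of `B` so that `∑ (λ i - μ (σ i))² ≤ tr (A - B)²`. Indeed `tr (A B) = ∑ λ i μ j |W i j|²`
for a unitary `W`, the matrix `(|W i j|²)` is doubly stochastic, and by Birkhoff's theorem this
linear function of it is maximised at a permutation matrix.

If `n ε³ ≥ ∑ (λ i - μ (σ i))²`, at most `n ε` indices have `λ i - μ (σ i) > ε`; every other
index with `μ (σ i) ≤ x` has `λ i ≤ x + ε`, so `F_B x ≤ F_A (x + ε) + ε`, and symmetrically.
Hence every `ε` above the cube root of `(1/n) ∑ (λ i - μ (σ i))²` is admissible in the Lévy metric.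
-/

open Finset

/-- The Lévy distance between two distribution functions. -/
noncomputable def levyDist (F G : ℝ → ℝ) : ℝ :=
  sInf {ε : ℝ | 0 < ε ∧ ∀ x, F (x - ε) - ε ≤ G x ∧ G x ≤ F (x + ε) + ε}

namespace Matrix

variable {n 𝕜 : Type*} [Fintype n] [DecidableEq n] [RCLike 𝕜]

lemma sum_norm_sq_apply_of_mem_unitaryGroup {U : Matrix n n 𝕜} (hU : U ∈ unitaryGroup n 𝕜)
    (i : n) : ∑ j, ‖U i j‖ ^ 2 = 1 := by
  have := congrArg (fun M : Matrix n n 𝕜 => M i i) (Unitary.mul_star_self_of_mem hU)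
  simp only [mul_apply, star_apply, RCLike.star_def, RCLike.mul_conj, one_apply_eq] at this
  exact_mod_cast this

lemma of_norm_sq_mem_doublyStochastic {U : Matrix n n 𝕜} (hU : U ∈ unitaryGroup n 𝕜) :
    of (fun i j => ‖U i j‖ ^ 2) ∈ doublyStochastic ℝ n := by
  refine (mem_doublyStochastic_iff_sum).2
    ⟨fun _ _ => sq_nonneg _, sum_norm_sq_apply_of_mem_unitaryGroup hU, fun j => ?_⟩
  simpa using sum_norm_sq_apply_of_mem_unitaryGroup (Unitary.star_mem hU) j

lemma exists_perm_sum_mul_mul_le_of_mem_doublyStochastic (a b : n → ℝ) {S : Matrix n n ℝ}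
    (hS : S ∈ doublyStochastic ℝ n) :
    ∃ σ : Equiv.Perm n, ∑ i, ∑ j, a i * b j * S i j ≤ ∑ i, a i * b (σ i) := by
  let φ : Matrix n n ℝ →ₗ[ℝ] ℝ := ∑ i, ∑ j, (a i * b j) • entryLinearMap ℝ ℝ i j
  rw [← SetLike.mem_coe, doublyStochastic_eq_convexHull_permMatrix] at hS
  obtain ⟨_, ⟨σ, rfl⟩, hσ⟩ :=
    (φ.convexOn convex_univ).exists_ge_of_mem_convexHull (Set.subset_univ _) hS
  refine ⟨σ, ?_⟩
  simpa [φ, Equiv.Perm.permMatrix, PEquiv.toMatrix_apply, eq_comm] using hσ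

lemma re_trace_diagonal_mul_mul_diagonal_mul_conjTranspose (a b : n → ℝ) (W : Matrix n n 𝕜) :
    RCLike.re (trace (diagonal (RCLike.ofReal ∘ a) * W * diagonal (RCLike.ofReal ∘ b) * Wᴴ)) =
      ∑ i, ∑ j, a i * b j * ‖W i j‖ ^ 2 := by
  rw [trace, map_sum]
  refine sum_congr rfl fun i _ => ?_
  rw [diag_apply, mul_apply, map_sum]
  refine sum_congr rfl fun j _ => ?_
  rw [mul_diagonal, diagonal_mul, conjTranspose_apply, RCLike.star_def, Function.comp_apply,
    Function.comp_apply, mul_right_comm _ (W i j), mul_assoc, RCLike.mul_conj, ← RCLike.ofReal_mul,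
    ← RCLike.ofReal_pow, ← RCLike.ofReal_mul, RCLike.ofReal_re]

namespace IsHermitian

variable {A B : Matrix n n 𝕜}

lemma re_trace_mul_eq (hA : A.IsHermitian) (hB : B.IsHermitian) :
    RCLike.re (trace (A * B)) = ∑ i, ∑ j, hA.eigenvalues i * hB.eigenvalues j *
      ‖((hA.eigenvectorUnitary : Matrix n n 𝕜)ᴴ * hB.eigenvectorUnitary) i j‖ ^ 2 := by
  rw [← re_trace_diagonal_mul_mul_diagonal_mul_conjTranspose]
  conv_lhs => rw [hA.spectral_theorem, hB.spectral_theorem]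
  simp only [Unitary.conjStarAlgAut_apply, conjTranspose_mul, conjTranspose_conjTranspose,
    star_eq_conjTranspose, Matrix.mul_assoc]
  rw [trace_mul_comm]
  simp only [Matrix.mul_assoc]

lemma re_trace_mul_self (hA : A.IsHermitian) :
    RCLike.re (trace (A * A)) = ∑ i, hA.eigenvalues i ^ 2 := by
  rw [hA.re_trace_mul_eq hA, ← star_eq_conjTranspose, Unitary.coe_star_mul_self]
  refine sum_congr rfl fun i _ => ?_
  simp [one_apply, apply_ite (‖·‖), sq]

lemma exists_perm_re_trace_mul_le (hA : A.IsHermitian) (hB : B.IsHermitian) :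
    ∃ σ : Equiv.Perm n, RCLike.re (trace (A * B)) ≤ ∑ i, hA.eigenvalues i * hB.eigenvalues (σ i) :=
  hA.re_trace_mul_eq hB ▸ exists_perm_sum_mul_mul_le_of_mem_doublyStochastic _ _
    (of_norm_sq_mem_doublyStochastic (mul_mem (Unitary.star_mem hA.eigenvectorUnitary.2)
      hB.eigenvectorUnitary.2))

theorem exists_perm_sum_sq_eigenvalues_sub_le (hA : A.IsHermitian) (hB : B.IsHermitian) :
    ∃ σ : Equiv.Perm n, ∑ i, (hA.eigenvalues i - hB.eigenvalues (σ i)) ^ 2 ≤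
      RCLike.re (trace ((A - B) ^ 2)) := by
  obtain ⟨σ, hσ⟩ := hA.exists_perm_re_trace_mul_le hB
  refine ⟨σ, ?_⟩
  have htrace : RCLike.re (trace ((A - B) ^ 2)) =
      RCLike.re (trace (A * A)) + RCLike.re (trace (B * B)) - 2 * RCLike.re (trace (A * B)) := by
    rw [sq, sub_mul, mul_sub, mul_sub, trace_sub, trace_sub, trace_sub, trace_mul_comm B A]
    simp only [map_sub]
    ring
  have hsum : ∑ i, (hA.eigenvalues i - hB.eigenvalues (σ i)) ^ 2 =
      ∑ i, hA.eigenvalues i ^ 2 + ∑ i, hB.eigenvalues (σ i) ^ 2 -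
        2 * ∑ i, hA.eigenvalues i * hB.eigenvalues (σ i) := by
    simp only [sub_sq, sum_add_distrib, sum_sub_distrib, mul_sum, mul_assoc]
    ring
  rw [hsum, htrace, hA.re_trace_mul_self, hB.re_trace_mul_self,
    ← Equiv.sum_comp σ (fun i => hB.eigenvalues i ^ 2)]
  linarith

end IsHermitian

end Matrix

section LevyDist

variable {F G : ℝ → ℝ}

lemma levyDist_nonneg : 0 ≤ levyDist F G :=
  Real.sInf_nonneg fun _ hε => hε.1.le

lemma levyDist_le_of_forall_lt {c : ℝ} (hc : 0 ≤ c)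
    (h : ∀ ε > c, ∀ x, F (x - ε) - ε ≤ G x ∧ G x ≤ F (x + ε) + ε) : levyDist F G ≤ c := by
  refine le_of_forall_pos_le_add fun δ hδ => csInf_le ⟨0, fun _ hε => hε.1.le⟩ ?_
  exact ⟨by positivity, h (c + δ) (by linarith)⟩

end LevyDist

section EmpiricalCDF

lemma card_filter_le_le_card_filter_le_add {ι : Type*} [Fintype ι] (f g : ι → ℝ) (y ε : ℝ) :
    #{i | g i ≤ y} ≤ #{i | f i ≤ y + ε} + #{i | ε < f i - g i} := by
  classical
  refine (card_le_card fun i => ?_).trans (card_union_le _ _)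
  simp only [mem_filter, mem_univ, true_and, mem_union]
  intro hi
  by_contra! h
  linarith [h.1, h.2]

lemma card_filter_lt_mul_sq_le_sum_sq {ι : Type*} [Fintype ι] (d : ι → ℝ) {ε : ℝ} (hε : 0 ≤ ε) :
    #{i | ε < d i} * ε ^ 2 ≤ ∑ i, d i ^ 2 := by
  calc #{i | ε < d i} * ε ^ 2 ≤ ∑ i with ε < d i, d i ^ 2 := by
        rw [← nsmul_eq_mul]
        exact card_nsmul_le_sum _ _ _ fun i hi => pow_le_pow_left₀ hε (mem_filter.1 hi).2.le 2
    _ ≤ ∑ i, d i ^ 2 := sum_le_sum_of_subset_of_nonneg (subset_univ _) fun i _ _ => sq_nonneg _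

variable {n : ℕ}

noncomputable def empiricalCDF (f : Fin n → ℝ) (x : ℝ) : ℝ := #{i | f i ≤ x} / n

lemma empiricalCDF_comp_perm (f : Fin n → ℝ) (σ : Equiv.Perm (Fin n)) :
    empiricalCDF (f ∘ σ) = empiricalCDF f := by
  ext x
  simp only [empiricalCDF]
  congr 2
  exact card_equiv σ fun i => by simp

lemma empiricalCDF_le_empiricalCDF_add (f g : Fin n → ℝ) {ε : ℝ} (hε : 0 < ε)
    (h : ∑ i, (f i - g i) ^ 2 ≤ n * ε ^ 3) (y : ℝ) :
    empiricalCDF g y ≤ empiricalCDF f (y + ε) + ε := by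
  have hbad : (#{i | ε < f i - g i} : ℝ) ≤ n * ε := by
    have := (card_filter_lt_mul_sq_le_sum_sq (fun i => f i - g i) hε.le).trans h
    nlinarith [pow_pos hε 2]
  have hcount : (#{i | g i ≤ y} : ℝ) ≤ #{i | f i ≤ y + ε} + n * ε := by
    grw [← hbad]
    exact_mod_cast card_filter_le_le_card_filter_le_add f g y ε
  rcases (Nat.cast_nonneg (α := ℝ) n).eq_or_lt with hn | hn
  · simp [empiricalCDF, ← hn, hε.le]
  · rw [empiricalCDF, empiricalCDF, div_add' _ _ _ hn.ne', div_le_div_iff_of_pos_right hn]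
    linarith

lemma levyDist_empiricalCDF_pow_three_le (f g : Fin n → ℝ) :
    levyDist (empiricalCDF f) (empiricalCDF g) ^ 3 ≤ (∑ i, (f i - g i) ^ 2) / n := by
  set T := (∑ i, (f i - g i) ^ 2) / n
  have hT : 0 ≤ T := by positivity
  have hsum : ∑ i, (f i - g i) ^ 2 ≤ n * T := by
    rcases eq_or_ne n 0 with rfl | hn
    · simp
    · rw [mul_div_cancel₀ _ (by positivity)]
  have hcube : (T ^ (3⁻¹ : ℝ)) ^ 3 = T := Real.rpow_inv_natCast_pow hT three_ne_zero
  rw [← hcube]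
  refine pow_le_pow_left₀ levyDist_nonneg (levyDist_le_of_forall_lt (by positivity) ?_) 3
  intro ε hε x
  have hε0 : 0 < ε := lt_of_le_of_lt (by positivity) hε
  have hsum' : ∑ i, (f i - g i) ^ 2 ≤ n * ε ^ 3 := by
    grw [hsum, ← hcube, hε]
  refine ⟨?_, empiricalCDF_le_empiricalCDF_add f g hε0 hsum' x⟩
  have hsymm : ∑ i, (g i - f i) ^ 2 ≤ n * ε ^ 3 := by simpa only [sub_sq_comm] using hsum'
  simpa using empiricalCDF_le_empiricalCDF_add g f hε0 hsymm (x - ε)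

end EmpiricalCDF

/-- Perturbation inequality (Bai–Silverstein Theorem A.41): for Hermitian `A`, `B`,
`L(F_A, F_B)³ ≤ (1/n)·tr((A − B)²)`. -/
theorem perturbation_inequality {n : ℕ} {A B : Matrix (Fin n) (Fin n) ℂ}
    (hA : A.IsHermitian) (hB : B.IsHermitian) :
    levyDist (esdCDF hA) (esdCDF hB) ^ 3
      ≤ (Matrix.trace ((A - B) ^ 2)).re / n := by
  obtain ⟨σ, hσ⟩ := hA.exists_perm_sum_sq_eigenvalues_sub_le hB
  calc levyDist (esdCDF hA) (esdCDF hB) ^ 3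
      = levyDist (empiricalCDF hA.eigenvalues) (empiricalCDF (hB.eigenvalues ∘ σ)) ^ 3 := by
        rw [empiricalCDF_comp_perm]
        rfl
    _ ≤ (∑ i, (hA.eigenvalues i - hB.eigenvalues (σ i)) ^ 2) / n :=
        levyDist_empiricalCDF_pow_three_le _ _
    _ ≤ _ := div_le_div_of_nonneg_right hσ n.cast_nonneg
end
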